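/- Let A₄(n) denote the number of permutations of length n containing no 132 pattern and exactly four 123 patterns. Then in ℚ[[z]], the generating function F₄(z) = ∑_{n≥0} A₄(n)·zⁿ satisfies (1 - 2z)⁵·F₄(z) = -z⁴·(z⁵ - 3z⁴ + 11z³ - 13z² + 6z - 1). -/

import Mathlib

/-- The number of 132 patterns of a permutation `π` of `Fin n`:
triples of indices `i₁ < i₂ < i₃` with `π i₁ < π i₃ < π i₂`. -/
def count132 {n : ℕ} (π : Equiv.Perm (Fin n)) : ℕ :=
  (Finset.univ.filter (fun p : Fin n × Fin n × Fin n =>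
    p.1 < p.2.1 ∧ p.2.1 < p.2.2 ∧ π p.1 < π p.2.2 ∧ π p.2.2 < π p.2.1)).card

/-- The number of 123 patterns of a permutation `π` of `Fin n`:
triples of indices `i₁ < i₂ < i₃` with `π i₁ < π i₂ < π i₃`. -/
def count123 {n : ℕ} (π : Equiv.Perm (Fin n)) : ℕ :=
  (Finset.univ.filter (fun p : Fin n × Fin n × Fin n =>
    p.1 < p.2.1 ∧ p.2.1 < p.2.2 ∧ π p.1 < π p.2.1 ∧ π p.2.1 < π p.2.2)).card

/-- The number of 12 patterns of a permutation `π` of `Fin n`: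
pairs of indices `i₁ < i₂` with `π i₁ < π i₂`. -/
def count12 {n : ℕ} (π : Equiv.Perm (Fin n)) : ℕ :=
  (Finset.univ.filter (fun p : Fin n × Fin n =>
    p.1 < p.2 ∧ π p.1 < π p.2)).card

/-- The number of permutations of length n with no 132 pattern and exactly 4 123 patterns. -/
def A (n : ℕ) : ℕ :=
  (Finset.univ.filter (fun π : Equiv.Perm (Fin n) =>
    count132 π = 0 ∧ count123 π = 4)).card

/-!
A 132-avoiding permutation of length `n + 1` whose maximum sits at position `p` is `(L ⊕ 1) ⊖ R`
with `L`, `R` 132-avoiding of lengths `p`, `n - p`: an entry left of the maximum below an entry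
right of it would form a 132 with the maximum. Its 123 patterns are those of `L` and `R` plus the
12 patterns of `L` completed by the maximum, and its 12 patterns are those of `L` and `R` plus the
`p` pairs ending at the maximum. Hence the weight `count123 + m * count12` splits as
`weight (m + 1) L + m * p + weight m R`, a convolution recurrence for the generating functions of
132-avoiders of fixed weight. For `m = 1` and weight at most 4 the left factors are explicit
monomials, and the resulting triangular systems for `m = 1` and `m = 0` solve in `ℚ⟦X⟧`.
-/

section

open Equiv Finset

variable {a b n p q : ℕ}

lemma Fin.not_add_lt_val (k : Fin n) (x : ℕ) : ¬ n + x < k := by omega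

lemma Fin.not_lt_val (k : Fin n) : ¬ n < k := by omega

def skewSum (F : Perm (Fin a)) (G : Perm (Fin b)) : Perm (Fin (a + b)) :=
  ((finSumFinEquiv.symm.trans (F.sumCongr G)).trans
    ((Equiv.sumComm _ _).trans finSumFinEquiv)).trans (finCongr (add_comm b a))

@[simp] lemma skewSum_castAdd (F : Perm (Fin a)) (G : Perm (Fin b)) (i : Fin a) :
    (skewSum F G (Fin.castAdd b i) : ℕ) = b + F i := by
  simp [skewSum, add_comm]

@[simp] lemma skewSum_natAdd (F : Perm (Fin a)) (G : Perm (Fin b)) (j : Fin b) :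
    (skewSum F G (Fin.natAdd a j) : ℕ) = G j := by
  simp [skewSum]

lemma count12_skewSum (F : Perm (Fin a)) (G : Perm (Fin b)) :
    count12 (skewSum F G) = count12 F + count12 G := by
  simp only [count12, card_filter, Fintype.sum_prod_type, Fin.sum_univ_add, Fin.lt_def,
    skewSum_castAdd, skewSum_natAdd, Fin.val_castAdd, Fin.val_natAdd, add_lt_add_iff_left,
    Fin.not_add_lt_val, and_false, false_and, if_false, sum_const_zero, add_zero, zero_add]

lemma count123_skewSum (F : Perm (Fin a)) (G : Perm (Fin b)) :
    count123 (skewSum F G) = count123 F + count123 G := by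
  simp only [count123, card_filter, Fintype.sum_prod_type, Fin.sum_univ_add, Fin.lt_def,
    skewSum_castAdd, skewSum_natAdd, Fin.val_castAdd, Fin.val_natAdd, add_lt_add_iff_left,
    Fin.not_add_lt_val, and_false, false_and, if_false, sum_const_zero, add_zero, zero_add]

lemma count132_skewSum (F : Perm (Fin a)) (G : Perm (Fin b)) :
    count132 (skewSum F G) = count132 F + count132 G := by
  simp only [count132, card_filter, Fintype.sum_prod_type, Fin.sum_univ_add, Fin.lt_def,
    skewSum_castAdd, skewSum_natAdd, Fin.val_castAdd, Fin.val_natAdd, add_lt_add_iff_left,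
    Fin.not_add_lt_val, and_false, false_and, if_false, sum_const_zero, add_zero, zero_add]

def appendMax (L : Perm (Fin p)) : Perm (Fin (p + 1)) :=
  (finSumFinEquiv.symm.trans (L.sumCongr (Equiv.refl (Fin 1)))).trans finSumFinEquiv

@[simp] lemma appendMax_castSucc (L : Perm (Fin p)) (i : Fin p) :
    (appendMax L (Fin.castSucc i) : ℕ) = L i := by
  show (appendMax L (Fin.castAdd 1 i) : ℕ) = L i
  simp [appendMax]

@[simp] lemma appendMax_last (L : Perm (Fin p)) : (appendMax L (Fin.last p) : ℕ) = p := by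
  simp [appendMax]

lemma count12_appendMax (L : Perm (Fin p)) : count12 (appendMax L) = count12 L + p := by
  simp only [count12, card_filter, Fintype.sum_prod_type, Fin.sum_univ_castSucc, Fin.lt_def,
    appendMax_castSucc, appendMax_last, Fin.val_castSucc, Fin.val_last, Fin.is_lt, Fin.not_lt_val,
    lt_self_iff_false, and_false, and_true, if_false, if_true, sum_const_zero, add_zero,
    sum_add_distrib, sum_const, card_univ, Fintype.card_fin, smul_eq_mul, mul_one]

lemma count123_appendMax (L : Perm (Fin p)) :
    count123 (appendMax L) = count123 L + count12 L := by
  simp only [count123, count12, card_filter, Fintype.sum_prod_type, Fin.sum_univ_castSucc,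
    Fin.lt_def, appendMax_castSucc, appendMax_last, Fin.val_castSucc, Fin.val_last, Fin.is_lt,
    Fin.not_lt_val, lt_self_iff_false, and_false, false_and, and_true, true_and, if_false,
    sum_const_zero, add_zero, sum_add_distrib]

lemma count132_appendMax (L : Perm (Fin p)) : count132 (appendMax L) = count132 L := by
  simp only [count132, card_filter, Fintype.sum_prod_type, Fin.sum_univ_castSucc, Fin.lt_def,
    appendMax_castSucc, appendMax_last, Fin.val_castSucc, Fin.val_last, Fin.is_lt, Fin.not_lt_val,
    lt_self_iff_false, and_false, false_and, and_true, if_false, sum_const_zero, add_zero]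

lemma exists_skewSum_eq (π : Perm (Fin (a + b))) (h : ∀ i : Fin a, b ≤ π (Fin.castAdd b i)) :
    ∃ F G, skewSum F G = π := by
  let f : Fin a → Fin a := fun i => ⟨π (Fin.castAdd b i) - b, by have := h i; omega⟩
  have hf : f.Injective := fun i j hij => by
    have hπ : π (Fin.castAdd b i) = π (Fin.castAdd b j) := by
      have := h i; have := h j; simp only [f, Fin.ext_iff] at hij ⊢; omega
    simpa [Fin.ext_iff] using π.injective hπ
  have hlow : ∀ j : Fin b, (π (Fin.natAdd a j) : ℕ) < b := fun j => by
    by_contra! hj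
    obtain ⟨i, hi⟩ :=
      Finite.injective_iff_surjective.mp hf ⟨π (Fin.natAdd a j) - b, by omega⟩
    have hπ : π (Fin.castAdd b i) = π (Fin.natAdd a j) := by
      have := h i; simp only [f, Fin.ext_iff] at hi ⊢; omega
    have := congrArg Fin.val (π.injective hπ)
    simp only [Fin.val_castAdd, Fin.val_natAdd] at this; omega
  let g : Fin b → Fin b := fun j => ⟨π (Fin.natAdd a j), hlow j⟩
  have hg : g.Injective := fun i j hij => by
    have hπ : π (Fin.natAdd a i) = π (Fin.natAdd a j) := by
      simpa only [g, Fin.ext_iff] using hij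
    simpa [Fin.ext_iff] using π.injective hπ
  refine ⟨.ofBijective f (Finite.injective_iff_bijective.mp hf),
    .ofBijective g (Finite.injective_iff_bijective.mp hg), ?_⟩
  ext x
  induction x using Fin.addCases with
  | left i => have := h i; simp only [skewSum_castAdd, ofBijective_apply, f]; omega
  | right j => simp [g]

lemma exists_appendMax_eq (F : Perm (Fin (p + 1))) (h : F (Fin.last p) = Fin.last p) :
    ∃ L, appendMax L = F := by
  have hne : ∀ i : Fin p, F i.castSucc ≠ Fin.last p := fun i hi =>
    Fin.castSucc_ne_last i (F.injective (hi.trans h.symm))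
  let l : Fin p → Fin p := fun i => (F i.castSucc).castPred (hne i)
  have hl : l.Injective := fun i j hij => by
    simpa using F.injective (Fin.castPred_inj.mp hij)
  refine ⟨.ofBijective l (Finite.injective_iff_bijective.mp hl), ?_⟩
  ext x
  induction x using Fin.lastCases with
  | last => simp [h]
  | cast i => simp [l]

lemma exists_skewSum_appendMax_eq (π : Perm (Fin (p + 1 + q))) (h132 : count132 π = 0)
    (hmax : (π ⟨p, by omega⟩ : ℕ) = p + q) : ∃ L R, skewSum (appendMax L) R = π := by
  have hdesc : ∀ i k : Fin (p + 1 + q), (i : ℕ) < p → p < (k : ℕ) → π k < π i := by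
    intro i k hi hk
    have hnot := filter_eq_empty_iff.mp (card_eq_zero.mp h132) (mem_univ (i, ⟨p, by omega⟩, k))
    have hik : (π i : ℕ) ≠ π k := fun h => by
      have := congrArg Fin.val (π.injective (Fin.ext h)); omega
    have hkp : (π k : ℕ) ≠ p + q := fun h => by
      have :=
        congrArg Fin.val (π.injective (a₂ := ⟨p, by omega⟩) (Fin.ext (h.trans hmax.symm)))
      simp only at this; omega
    have := (π k).isLt
    simp only [Fin.lt_def, hmax, not_and, not_lt] at hnot ⊢
    by_contra! hle
    exact absurd (hnot hi hk (by omega)) (by omega)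
  have hhigh : ∀ i : Fin (p + 1), q ≤ π (Fin.castAdd q i) := by
    intro i
    rcases Fin.eq_castSucc_or_eq_last i with ⟨i, rfl⟩ | rfl
    · let e : Fin q → Fin (π (Fin.castAdd q i.castSucc)) := fun j =>
        ⟨π (Fin.natAdd (p + 1) j), hdesc _ _ (by simp) (by simp only [Fin.val_natAdd]; omega)⟩
      have he : e.Injective := fun j j' hjj' => by
        have hπ : π (Fin.natAdd (p + 1) j) = π (Fin.natAdd (p + 1) j') := by
          simpa only [e, Fin.ext_iff] using hjj'
        simpa [Fin.ext_iff] using π.injective hπ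
      simpa using Fintype.card_le_of_injective e he
    · simp only [show Fin.castAdd q (Fin.last p) = ⟨p, by omega⟩ from rfl, hmax]; omega
  obtain ⟨F, R, rfl⟩ := exists_skewSum_eq π hhigh
  have hF : F (Fin.last p) = Fin.last p := by
    rw [show (⟨p, by omega⟩ : Fin (p + 1 + q)) = Fin.castAdd q (Fin.last p) from rfl,
      skewSum_castAdd] at hmax
    ext; simp only [Fin.val_last]; omega
  obtain ⟨L, rfl⟩ := exists_appendMax_eq F hF
  exact ⟨L, R, rfl⟩

lemma skewSum_appendMax_injective :
    Function.Injective fun LR : Perm (Fin p) × Perm (Fin q) => skewSum (appendMax LR.1) LR.2 := by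
  rintro ⟨L, R⟩ ⟨L', R'⟩ h
  have hval := fun x => congrArg Fin.val (DFunLike.congr_fun h x)
  simp only [Prod.mk.injEq]
  constructor
  · ext i; simpa using hval (Fin.castAdd q i.castSucc)
  · ext j; simpa using hval (Fin.natAdd (p + 1) j)

def weight (m : ℕ) (π : Perm (Fin n)) : ℕ := count123 π + m * count12 π

lemma count132_skewSum_appendMax (L : Perm (Fin p)) (R : Perm (Fin q)) :
    count132 (skewSum (appendMax L) R) = count132 L + count132 R := by
  rw [count132_skewSum, count132_appendMax]

lemma weight_skewSum_appendMax (m : ℕ) (L : Perm (Fin p)) (R : Perm (Fin q)) :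
    weight m (skewSum (appendMax L) R) = weight (m + 1) L + m * p + weight m R := by
  simp only [weight, count123_skewSum, count12_skewSum, count123_appendMax, count12_appendMax]
  ring

-- Stated for any `N = p + 1 + q`, with the position of the maximum written uniformly in `N`,
-- so that it applies to `Perm (Fin (n + 1))` although `n + 1` and `p + 1 + q` are not defeq.
lemma card_maxAt_eq_card_product (m t : ℕ) {N : ℕ} (hN : p + 1 + q = N) :
    #{π : Perm (Fin N) | count132 π = 0 ∧ weight m π = t ∧
        ∃ hp : p < N, (π ⟨p, hp⟩ : ℕ) + 1 = N} =
      #{LR ∈ ({L : Perm (Fin p) | count132 L = 0} : Finset _) ×ˢ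
          ({R : Perm (Fin q) | count132 R = 0} : Finset _) |
        weight (m + 1) LR.1 + m * p + weight m LR.2 = t} := by
  subst hN
  rw [← card_image_of_injective _ skewSum_appendMax_injective]
  congr 1
  ext π
  simp only [mem_filter, mem_univ, true_and, mem_image, mem_product, Prod.exists]
  constructor
  · rintro ⟨h132, rfl, hp, hmax⟩
    obtain ⟨L, R, rfl⟩ := exists_skewSum_appendMax_eq π h132 (by omega)
    have := count132_skewSum_appendMax L R
    exact ⟨L, R, ⟨⟨by omega, by omega⟩, (weight_skewSum_appendMax m L R).symm⟩, rfl⟩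
  · rintro ⟨L, R, ⟨⟨hL, hR⟩, rfl⟩, rfl⟩
    refine ⟨by rw [count132_skewSum_appendMax, hL, hR], weight_skewSum_appendMax m L R,
      by omega, ?_⟩
    simp only [show (⟨p, by omega⟩ : Fin (p + 1 + q)) = Fin.castAdd q (Fin.last p) from rfl,
      skewSum_castAdd, appendMax_last]
    omega

lemma card_filter_product_add_eq {α β : Type*} (s : Finset α) (s' : Finset β) (u : α → ℕ)
    (v : β → ℕ) (t : ℕ) :
    #{x ∈ s ×ˢ s' | u x.1 + v x.2 = t} =
      ∑ ij ∈ antidiagonal t, #{a ∈ s | u a = ij.1} * #{b ∈ s' | v b = ij.2} := by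
  classical
  rw [card_eq_sum_card_fiberwise (f := fun x => (u x.1, v x.2)) (t := antidiagonal t)
    (by intro x hx; simpa using (mem_filter.mp hx).2)]
  refine sum_congr rfl fun ij hij => ?_
  rw [filter_filter, ← card_product, ← filter_product]
  congr 1
  refine filter_congr fun x _ => ?_
  rw [HasAntidiagonal.mem_antidiagonal] at hij
  constructor
  · rintro ⟨-, rfl⟩; simp
  · rintro ⟨h1, h2⟩; simp only [Prod.ext_iff]; omega

def avCount (m t n : ℕ) : ℕ := #{π : Perm (Fin n) | count132 π = 0 ∧ weight m π = t}

def leftCount (m i p : ℕ) : ℕ :=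
  #{L : Perm (Fin p) | count132 L = 0 ∧ weight (m + 1) L + m * p = i}

lemma avCount_zero (m t : ℕ) : avCount m t 0 = if t = 0 then 1 else 0 := by
  split_ifs with ht <;> simp [avCount, weight, count123, count12, count132, ht, eq_comm]

lemma symm_last_eq_iff (hpq : p + q = n) (π : Perm (Fin (n + 1))) :
    ((π.symm (Fin.last n) : ℕ), n - π.symm (Fin.last n)) = (p, q) ↔
      ∃ hp : p < n + 1, (π ⟨p, hp⟩ : ℕ) + 1 = n + 1 := by
  constructor
  · rintro h
    obtain ⟨h1, -⟩ := Prod.ext_iff.mp h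
    refine ⟨by omega, ?_⟩
    simp only at h1
    rw [show (⟨p, _⟩ : Fin (n + 1)) = π.symm (Fin.last n) from Fin.ext h1.symm]
    simp
  · rintro ⟨hp, hmax⟩
    rw [show Fin.last n = π ⟨p, hp⟩ from Fin.ext (by simp only [Fin.val_last]; omega),
      symm_apply_apply]
    simp only [Prod.mk.injEq, true_and]; omega

lemma avCount_succ (m t n : ℕ) :
    avCount m t (n + 1) = ∑ pq ∈ antidiagonal n, ∑ ij ∈ antidiagonal t,
      leftCount m ij.1 pq.1 * avCount m ij.2 pq.2 := by
  rw [avCount, card_eq_sum_card_fiberwise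
    (f := fun π => ((π.symm (Fin.last n) : ℕ), n - π.symm (Fin.last n))) (t := antidiagonal n)
    (fun π _ => by simpa using Nat.add_sub_of_le (π.symm (Fin.last n)).is_le)]
  refine sum_congr rfl fun ⟨p, q⟩ hpq => ?_
  rw [HasAntidiagonal.mem_antidiagonal] at hpq
  simp only [filter_filter, symm_last_eq_iff hpq, and_assoc]
  rw [card_maxAt_eq_card_product m t (by omega : p + 1 + q = n + 1),
    card_filter_product_add_eq _ _ (fun L => weight (m + 1) L + m * p) (weight m)]
  simp only [filter_filter, leftCount, avCount]

open PowerSeries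

noncomputable def avGF (m t : ℕ) : PowerSeries ℚ := mk fun n => (avCount m t n : ℚ)

noncomputable def leftGF (m i : ℕ) : PowerSeries ℚ := mk fun p => (leftCount m i p : ℚ)

lemma avGF_eq (m t : ℕ) :
    avGF m t = C (if t = 0 then 1 else 0) +
      X * ∑ ij ∈ antidiagonal t, leftGF m ij.1 * avGF m ij.2 := by
  ext n
  rcases n with _ | n
  · simp [avGF, avCount_zero]
  · rw [map_add, coeff_C, if_neg n.succ_ne_zero, zero_add, coeff_succ_X_mul, map_sum]
    simp only [avGF, leftGF, coeff_mul, coeff_mk, avCount_succ, Nat.cast_sum, Nat.cast_mul]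
    exact sum_comm

lemma leftGF_zero (i : ℕ) : leftGF 0 i = avGF 1 i := by
  simp [leftGF, avGF, leftCount, avCount]

lemma leftCount_eq_zero {m i : ℕ} (h : i < m * p) : leftCount m i p = 0 := by
  rw [leftCount, card_eq_zero, filter_eq_empty_iff]
  intro L _ hL
  omega

lemma leftCount_one_of_le_four : ∀ i ≤ 4, ∀ p ≤ 4,
    leftCount 1 i p = (if p = i then 1 else 0) + if i = 4 ∧ p = 2 then 1 else 0 := by
  decide

lemma leftGF_one {i : ℕ} (hi : i ≤ 4) : leftGF 1 i = X ^ i + if i = 4 then X ^ 2 else 0 := by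
  ext p
  rw [leftGF, coeff_mk, map_add, coeff_X_pow, apply_ite (coeff p), coeff_X_pow, map_zero]
  rcases le_or_gt p 4 with hp | hp
  · rw [leftCount_one_of_le_four i hi p hp]
    split_ifs <;> simp_all
  · simp [leftCount_eq_zero (show i < 1 * p by omega), show p ≠ i by omega,
      show p ≠ 2 by omega]

lemma avGF_one_eq {t : ℕ} (ht : t ≤ 4) :
    avGF 1 t = C (if t = 0 then 1 else 0) +
      X * ∑ ij ∈ antidiagonal t, (X ^ ij.1 + if ij.1 = 4 then X ^ 2 else 0) * avGF 1 ij.2 := by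
  rw [avGF_eq]
  congr 2
  refine sum_congr rfl fun ij hij => ?_
  rw [leftGF_one (by have := HasAntidiagonal.mem_antidiagonal.mp hij; omega)]

lemma avGF_one_closed_forms :
    (1 - X) * avGF 1 0 = 1 ∧ (1 - X) ^ 2 * avGF 1 1 = X ^ 2 ∧ (1 - X) ^ 3 * avGF 1 2 = X ^ 3 ∧
      (1 - X) ^ 4 * avGF 1 3 = X ^ 4 ∧
      (1 - X) ^ 5 * avGF 1 4 = X ^ 3 - 3 * X ^ 4 + 4 * X ^ 5 - X ^ 6 := by
  have e0 := avGF_one_eq (t := 0) (by norm_num)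
  have e1 := avGF_one_eq (t := 1) (by norm_num)
  have e2 := avGF_one_eq (t := 2) (by norm_num)
  have e3 := avGF_one_eq (t := 3) (by norm_num)
  have e4 := avGF_one_eq (t := 4) (by norm_num)
  simp only [Finset.Nat.sum_antidiagonal_eq_sum_range_succ_mk, sum_range_succ, sum_range_zero]
    at e0 e1 e2 e3 e4
  norm_num at e0 e1 e2 e3 e4
  have h0 : (1 - X) * avGF 1 0 = 1 := by linear_combination e0
  have h1 : (1 - X) ^ 2 * avGF 1 1 = X ^ 2 := by linear_combination (1 - X) * e1 + X ^ 2 * h0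
  have h2 : (1 - X) ^ 3 * avGF 1 2 = X ^ 3 := by
    linear_combination (1 - X) ^ 2 * e2 + X ^ 2 * h1 + X ^ 3 * (1 - X) * h0
  have h3 : (1 - X) ^ 4 * avGF 1 3 = X ^ 4 := by
    linear_combination (1 - X) ^ 3 * e3 + X ^ 2 * h2 + X ^ 3 * (1 - X) * h1
      + X ^ 4 * (1 - X) ^ 2 * h0
  have h4 : (1 - X) ^ 5 * avGF 1 4 = X ^ 3 - 3 * X ^ 4 + 4 * X ^ 5 - X ^ 6 := by
    linear_combination (1 - X) ^ 4 * e4 + X ^ 2 * h3 + X ^ 3 * (1 - X) * h2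
      + X ^ 4 * (1 - X) ^ 2 * h1 + (X ^ 5 + X ^ 3) * (1 - X) ^ 3 * h0
  exact ⟨h0, h1, h2, h3, h4⟩

lemma one_sub_X_ne_zero : (1 - X : PowerSeries ℚ) ≠ 0 := fun h => by
  simpa using congrArg constantCoeff h

lemma avGF_zero_eq (t : ℕ) :
    avGF 0 t = C (if t = 0 then 1 else 0) +
      X * ∑ ij ∈ antidiagonal t, avGF 1 ij.1 * avGF 0 ij.2 := by
  simpa only [leftGF_zero] using avGF_eq 0 t

-- Each step clears the denominators `(1 - X) ^ k` of the closed forms of `avGF 1`.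
lemma avGF_zero_closed_forms :
    (1 - 2 * X) * avGF 0 0 = 1 - X ∧ (1 - 2 * X) ^ 2 * avGF 0 1 = X ^ 3 ∧
      (1 - 2 * X) ^ 3 * avGF 0 2 = X ^ 4 - X ^ 5 ∧
      (1 - 2 * X) ^ 4 * avGF 0 3 = X ^ 5 * (1 - X) ^ 2 := by
  obtain ⟨f0, f1, f2, f3, -⟩ := avGF_one_closed_forms
  have e0 := avGF_zero_eq 0
  have e1 := avGF_zero_eq 1
  have e2 := avGF_zero_eq 2
  have e3 := avGF_zero_eq 3
  simp only [Finset.Nat.sum_antidiagonal_eq_sum_range_succ_mk, sum_range_succ, sum_range_zero]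
    at e0 e1 e2 e3
  norm_num at e0 e1 e2 e3
  have g0 : (1 - 2 * X) * avGF 0 0 = 1 - X := by
    linear_combination (1 - X) * e0 + X * avGF 0 0 * f0
  have g1 : (1 - 2 * X) ^ 2 * avGF 0 1 = X ^ 3 := by
    refine mul_left_cancel₀ (pow_ne_zero 1 one_sub_X_ne_zero) ?_
    linear_combination (1 - X) ^ 2 * (1 - 2 * X) * e1 + X * (1 - X) * (1 - 2 * X) * avGF 0 1 * f0
      + X * (1 - 2 * X) * avGF 0 0 * f1 + X ^ 3 * g0
  have g2 : (1 - 2 * X) ^ 3 * avGF 0 2 = X ^ 4 - X ^ 5 := by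
    refine mul_left_cancel₀ (pow_ne_zero 2 one_sub_X_ne_zero) ?_
    linear_combination (1 - X) ^ 3 * (1 - 2 * X) ^ 2 * e2
      + X * (1 - X) ^ 2 * (1 - 2 * X) ^ 2 * avGF 0 2 * f0
      + X * (1 - X) * (1 - 2 * X) ^ 2 * avGF 0 1 * f1 + X ^ 3 * (1 - X) * g1
      + X * (1 - 2 * X) ^ 2 * avGF 0 0 * f2 + X ^ 4 * (1 - 2 * X) * g0
  refine ⟨g0, g1, g2, mul_left_cancel₀ (pow_ne_zero 3 one_sub_X_ne_zero) ?_⟩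
  linear_combination (1 - X) ^ 4 * (1 - 2 * X) ^ 3 * e3
    + X * (1 - X) ^ 3 * (1 - 2 * X) ^ 3 * avGF 0 3 * f0
    + X * (1 - X) ^ 2 * (1 - 2 * X) ^ 3 * avGF 0 2 * f1 + X ^ 3 * (1 - X) ^ 2 * g2
    + X * (1 - X) * (1 - 2 * X) ^ 3 * avGF 0 1 * f2 + X ^ 4 * (1 - X) * (1 - 2 * X) * g1
    + X * (1 - 2 * X) ^ 3 * avGF 0 0 * f3 + X ^ 5 * (1 - 2 * X) ^ 2 * g0

lemma avGF_zero_four :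
    (1 - 2 * X) ^ 5 * avGF 0 4 =
      X ^ 4 - 6 * X ^ 5 + 13 * X ^ 6 - 11 * X ^ 7 + 3 * X ^ 8 - X ^ 9 := by
  obtain ⟨f0, f1, f2, f3, f4⟩ := avGF_one_closed_forms
  obtain ⟨g0, g1, g2, g3⟩ := avGF_zero_closed_forms
  have e4 := avGF_zero_eq 4
  simp only [Finset.Nat.sum_antidiagonal_eq_sum_range_succ_mk, sum_range_succ, sum_range_zero] at e4
  norm_num at e4
  refine mul_left_cancel₀ (pow_ne_zero 4 one_sub_X_ne_zero) ?_
  linear_combination (1 - X) ^ 5 * (1 - 2 * X) ^ 4 * e4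
    + X * (1 - X) ^ 4 * (1 - 2 * X) ^ 4 * avGF 0 4 * f0
    + X * (1 - X) ^ 3 * (1 - 2 * X) ^ 4 * avGF 0 3 * f1 + X ^ 3 * (1 - X) ^ 3 * g3
    + X * (1 - X) ^ 2 * (1 - 2 * X) ^ 4 * avGF 0 2 * f2 + X ^ 4 * (1 - X) ^ 2 * (1 - 2 * X) * g2
    + X * (1 - X) * (1 - 2 * X) ^ 4 * avGF 0 1 * f3 + X ^ 5 * (1 - X) * (1 - 2 * X) ^ 2 * g1
    + X * (1 - 2 * X) ^ 4 * avGF 0 0 * f4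
    + X * (1 - 2 * X) ^ 3 * (X ^ 3 - 3 * X ^ 4 + 4 * X ^ 5 - X ^ 6) * g0

end

theorem genfun_no132_4 :
    (1 - 2 * PowerSeries.X) ^ 5 * PowerSeries.mk (fun n => (A n : ℚ)) = -(PowerSeries.X ^ 4) * (PowerSeries.X ^ 5 - 3 * PowerSeries.X ^ 4 + 11 * PowerSeries.X ^ 3 - 13 * PowerSeries.X ^ 2 + 6 * PowerSeries.X - 1) := by
  have hA : PowerSeries.mk (fun n => (A n : ℚ)) = avGF 0 4 := by
    ext n
    simp [A, avGF, avCount, weight]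
  rw [hA]
  linear_combination avGF_zero_four
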